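/- arXiv:2602.07313 — 6 statements merged into one kernel-verified Lean document; each statement's English description precedes it below -/
import Mathlib

section
/- Let λ₁ ≤ λ₂ ≤ ... ≤ λ_N be real numbers and let ω₁,...,ω_N be nonnegative weights with ω_α ≤ Ω for all α and ∑ω_α = S. Then for any integer 1 ≤ m ≤ N with S ≥ mΩ, we have ∑_{α=1}^N ω_α λ_α ≥ (S − mΩ)λ_{m+1} + Ω ∑_{α=1}^m λ_α. -/
/-!
Measured against the right-hand side, the weighted sum has the surplus
`∑_{α<m} (Ω - ω_α)(λ_m - λ_α) + ∑_{m≤α<N} ω_α (λ_α - λ_m)`, and every term of it is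
nonnegative because `λ` is nondecreasing and `0 ≤ ω_α ≤ Ω`.
-/

open Finset

namespace Finset

variable {ι R : Type*} [CommRing R] [PartialOrder R] [IsOrderedRing R]
  (s : Finset ι) {w f : ι → R} {Ω c : R}

theorem sum_mul_le_sum_mul_of_le (hw : ∀ i ∈ s, 0 ≤ w i) (hf : ∀ i ∈ s, c ≤ f i) :
    (∑ i ∈ s, w i) * c ≤ ∑ i ∈ s, w i * f i := by
  rw [sum_mul]
  exact sum_le_sum fun i hi => mul_le_mul_of_nonneg_left (hf i hi) (hw i hi)

theorem mul_sum_add_sub_mul_le_sum_mul (hw : ∀ i ∈ s, w i ≤ Ω) (hf : ∀ i ∈ s, f i ≤ c) :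
    Ω * ∑ i ∈ s, f i + (∑ i ∈ s, w i - #s * Ω) * c ≤ ∑ i ∈ s, w i * f i := by
  have hterm : ∀ i ∈ s, Ω * f i + (w i - Ω) * c ≤ w i * f i := fun i hi => by
    linear_combination mul_nonneg (sub_nonneg.2 (hw i hi)) (sub_nonneg.2 (hf i hi))
  calc Ω * ∑ i ∈ s, f i + (∑ i ∈ s, w i - #s * Ω) * c
      = ∑ i ∈ s, (Ω * f i + (w i - Ω) * c) := by
        rw [sum_add_distrib, mul_sum, ← sum_mul, sum_sub_distrib, sum_const, nsmul_eq_mul]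
    _ ≤ ∑ i ∈ s, w i * f i := sum_le_sum hterm

end Finset

/-- Indices are `0`-based: `lam m` is the paper's `λ_{m+1}`. -/
theorem weighted_sum_lower_bound_general (N m : ℕ) (lam ω : ℕ → ℝ)
    (hmono : Monotone lam)
    (hω0 : ∀ α, 0 ≤ ω α) (hωΩ : ∀ α, ω α ≤ Ω)
    (hS : ∑ α ∈ range N, ω α = S)
    (hmN : m ≤ N) :
    (S - m * Ω) * lam m + Ω * ∑ α ∈ range m, lam α ≤ ∑ α ∈ range N, ω α * lam α := by
  subst hS
  have hω := sum_range_add_sum_Ico ω hmN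
  have hωlam := sum_range_add_sum_Ico (fun α => ω α * lam α) hmN
  have hlow := (range m).mul_sum_add_sub_mul_le_sum_mul (fun α _ => hωΩ α)
    fun α hα => hmono (mem_range.1 hα).le
  have hhigh := (Ico m N).sum_mul_le_sum_mul_of_le (fun α _ => hω0 α)
    fun α hα => hmono (mem_Ico.1 hα).1
  rw [card_range] at hlow
  rw [← hω, ← hωlam]
  linear_combination hlow + hhigh

/-- Weighted-sum estimation principle (NPW Lemma 3.4): for a nondecreasing
sequence `λ` and weights `ω α ∈ [0, Ω]` with total weight `S`, for any
`1 ≤ m ≤ N` with `S ≥ m·Ω`,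
`∑ ω_α λ_α ≥ (S − mΩ) λ_{m+1} + Ω ∑_{α=1}^m λ_α` (0-indexed). -/
theorem weighted_sum_lower_bound (N m : ℕ) (lam ω : ℕ → ℝ)
    (hmono : Monotone lam)
    (hω0 : ∀ α, 0 ≤ ω α) (hωΩ : ∀ α, ω α ≤ Ω)
    (hS : ∑ α ∈ range N, ω α = S)
    (hm1 : 1 ≤ m) (hmN : m ≤ N) (hSm : (m : ℝ) * Ω ≤ S) :
    (S - m * Ω) * lam m + Ω * ∑ α ∈ range m, lam α ≤ ∑ α ∈ range N, ω α * lam α :=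
  weighted_sum_lower_bound_general N m lam ω hmono hω0 hωΩ hS hmN
end

section
/- Let λ₁ ≤ λ₂ ≤ ... ≤ λ_N be real numbers, Ω > 0 and S ≥ 0 with S ≤ NΩ. Suppose that for the real number k = S/Ω, writing m = ⌊k⌋, one has λ₁ + λ₂ + ... + λ_m + (k − m)λ_{m+1} ≥ 0 (i.e., the sequence is k-nonnegative). Then every weighted sum ∑ ω_α λ_α with weights 0 ≤ ω_α ≤ Ω and ∑ ω_α = S is nonnegative. -/
/-!
Measure every `λ_α` against the threshold `c = λ_m`, `m = ⌊S/Ω⌋`. Since `ω_α ≤ Ω` and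
`λ_α ≤ c` below `m`, while `ω_α ≥ 0` and `λ_α ≥ c` from `m` on, the sum `∑ ω_α (λ_α - c)`
is at least `Ω ∑_{α < m} (λ_α - c)`: the greedy weights, `Ω` on the first `m` indices, are
extremal. Adding back `S c = (m + (S/Ω - m)) Ω c` turns this bound into `Ω` times the
`S/Ω`-nonnegativity sum.
-/

open Finset

theorem Monotone.mul_sum_range_sub_le_sum_mul_sub {lam ω : ℕ → ℝ} {Ω : ℝ} {m N : ℕ}
    (hmono : Monotone lam) (hω0 : ∀ α, 0 ≤ ω α) (hωΩ : ∀ α, ω α ≤ Ω) (hmN : m ≤ N) :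
    Ω * ∑ α ∈ range m, (lam α - lam m) ≤ ∑ α ∈ range N, ω α * (lam α - lam m) := by
  rw [← sum_range_add_sum_Ico _ hmN, mul_sum]
  have below : ∑ α ∈ range m, Ω * (lam α - lam m) ≤ ∑ α ∈ range m, ω α * (lam α - lam m) :=
    sum_le_sum fun α hα =>
      mul_le_mul_of_nonpos_right (hωΩ α) (sub_nonpos.2 (hmono (mem_range.1 hα).le))
  have above : 0 ≤ ∑ α ∈ Ico m N, ω α * (lam α - lam m) :=
    sum_nonneg fun α hα => mul_nonneg (hω0 α) (sub_nonneg.2 (hmono (mem_Ico.1 hα).1))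
  linarith

theorem k_nonneg_implies_weighted_sum_nonneg_general (N : ℕ) (lam ω : ℕ → ℝ) (Ω S : ℝ)
    (hmono : Monotone lam)
    (hΩ : 0 < Ω) (hSN : S ≤ N * Ω)
    (hk : ∑ α ∈ range ⌊S / Ω⌋₊, lam α + (S / Ω - ⌊S / Ω⌋₊) * lam ⌊S / Ω⌋₊ ≥ 0)
    (hω0 : ∀ α, 0 ≤ ω α) (hωΩ : ∀ α, ω α ≤ Ω)
    (hsum : ∑ α ∈ range N, ω α = S) :
    0 ≤ ∑ α ∈ range N, ω α * lam α := by
  set k := S / Ω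
  set m := ⌊k⌋₊
  have hmN : m ≤ N := by
    simpa using Nat.floor_le_floor ((div_le_iff₀ hΩ).2 hSN)
  have hS : S = k * Ω := (div_mul_cancel₀ S hΩ.ne').symm
  have greedy := hmono.mul_sum_range_sub_le_sum_mul_sub hω0 hωΩ hmN
  calc 0 ≤ Ω * (∑ α ∈ range m, lam α + (k - m) * lam m) := mul_nonneg hΩ.le hk
    _ = Ω * ∑ α ∈ range m, (lam α - lam m) + S * lam m := by
      rw [sum_sub_distrib, sum_const, card_range, nsmul_eq_mul, hS]
      ring
    _ ≤ ∑ α ∈ range N, ω α * (lam α - lam m) + S * lam m := by gcongr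
    _ = ∑ α ∈ range N, ω α * lam α := by
      simp only [mul_sub, sum_sub_distrib, ← sum_mul, hsum]
      ring

/-- k-nonnegativity with `k = S/Ω` implies nonnegativity of every weighted sum
with weights in `[0, Ω]` and total weight `S` (NPW Lemma 3.4, second part). -/
theorem k_nonneg_implies_weighted_sum_nonneg (N : ℕ) (lam ω : ℕ → ℝ) (Ω S : ℝ)
    (hmono : Monotone lam)
    (hΩ : 0 < Ω) (hS0 : 0 ≤ S) (hSN : S ≤ N * Ω)
    (hk : ∑ α ∈ range ⌊S / Ω⌋₊, lam α + (S / Ω - ⌊S / Ω⌋₊) * lam ⌊S / Ω⌋₊ ≥ 0)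
    (hω0 : ∀ α, 0 ≤ ω α) (hωΩ : ∀ α, ω α ≤ Ω)
    (hsum : ∑ α ∈ range N, ω α = S) :
    0 ≤ ∑ α ∈ range N, ω α * lam α :=
  k_nonneg_implies_weighted_sum_nonneg_general N lam ω Ω S hmono hΩ hSN hk hω0 hωΩ hsum
end

section
/- Let a₁, a₂, a₃ be real numbers with a₁ + a₂ + a₃ = 0 and a_i ≤ s/6 for a fixed real s > 0. Then s(a₁² + a₂² + a₃²) − 36 a₁a₂a₃ ≥ 0, with equality if and only if (a₁,a₂,a₃) = (0,0,0) or {a₁,a₂,a₃} = {−s/12, −s/12, s/6}. -/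
private lemma weitz_key (s a b c : ℝ) (hs : 0 < s) (hsum : a + b + c = 0)
    (hc : c ≤ s / 6) (hca : a ≤ c) (hcb : b ≤ c) :
    0 ≤ s * (a ^ 2 + b ^ 2 + c ^ 2) - 36 * (a * b * c) ∧
      (s * (a ^ 2 + b ^ 2 + c ^ 2) - 36 * (a * b * c) = 0 ↔
        (a = 0 ∧ b = 0 ∧ c = 0) ∨ (a = -s / 12 ∧ b = -s / 12 ∧ c = s / 6)) := by
  have hc0 : 0 ≤ c := by linarith
  have hid : s * (a ^ 2 + b ^ 2 + c ^ 2) - 36 * (a * b * c)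
      = (1 / 2) * (a - b) ^ 2 * (s + 18 * c) + 9 * c ^ 2 * (s / 6 - c) := by
    have hb : b = -a - c := by linarith
    subst hb; ring
  have hA : 0 ≤ (1 / 2) * (a - b) ^ 2 * (s + 18 * c) :=
    mul_nonneg (by positivity) (by linarith)
  have hB : 0 ≤ 9 * c ^ 2 * (s / 6 - c) :=
    mul_nonneg (by positivity) (by linarith)
  refine ⟨by rw [hid]; linarith, ?_, ?_⟩
  · intro h
    rw [hid] at h
    have e1 : (1 / 2) * (a - b) ^ 2 * (s + 18 * c) = 0 := by linarith
    have e2 : 9 * c ^ 2 * (s / 6 - c) = 0 := by linarith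
    have hab : a = b := by
      rcases mul_eq_zero.mp e1 with h' | h'
      · have : (a - b) ^ 2 = 0 := by linarith
        have := pow_eq_zero_iff (n := 2) (by norm_num) |>.mp this
        linarith
      · linarith
    rcases mul_eq_zero.mp e2 with h' | h'
    · have : c ^ 2 = 0 := by linarith
      have hc' : c = 0 := pow_eq_zero_iff (n := 2) (by norm_num) |>.mp this
      exact Or.inl ⟨by linarith, by linarith, hc'⟩
    · exact Or.inr ⟨by linarith, by linarith, by linarith⟩
  · rintro (⟨ha, hb, hc'⟩ | ⟨ha, hb, hc'⟩) <;> rw [ha, hb, hc'] <;> ring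

private lemma weitz_perm1 (x y z : ℝ) : ({x, y, z} : Multiset ℝ) = {z, x, y} := by
  rw [show ({z, x, y} : Multiset ℝ) = z ::ₘ x ::ₘ y ::ₘ 0 from rfl,
      show ({x, y, z} : Multiset ℝ) = x ::ₘ y ::ₘ z ::ₘ 0 from rfl,
      Multiset.cons_swap y z, Multiset.cons_swap x z]

private lemma weitz_perm2 (x y z : ℝ) : ({x, y, z} : Multiset ℝ) = {y, z, x} := by
  rw [show ({y, z, x} : Multiset ℝ) = y ::ₘ z ::ₘ x ::ₘ 0 from rfl,
      show ({x, y, z} : Multiset ℝ) = x ::ₘ y ::ₘ z ::ₘ 0 from rfl,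
      Multiset.cons_swap x y, Multiset.cons_swap x z]

private lemma weitz_perm3 (x y z : ℝ) : ({x, y, z} : Multiset ℝ) = {x, z, y} := by
  rw [show ({x, z, y} : Multiset ℝ) = x ::ₘ z ::ₘ y ::ₘ 0 from rfl,
      show ({x, y, z} : Multiset ℝ) = x ::ₘ y ::ₘ z ::ₘ 0 from rfl,
      Multiset.cons_swap y z]

/-- Key algebraic minimization in Theorem C: for a trace-free triple bounded
above by `s/6`, `s(a₁²+a₂²+a₃²) − 36 a₁a₂a₃ ≥ 0`, with equality iff the triple
is `(0,0,0)` or a permutation of `(−s/12, −s/12, s/6)`. -/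
theorem weitzenboeck_term_nonneg (a1 a2 a3 s : ℝ) (hs : 0 < s)
    (hsum : a1 + a2 + a3 = 0)
    (h1 : a1 ≤ s / 6) (h2 : a2 ≤ s / 6) (h3 : a3 ≤ s / 6) :
    0 ≤ s * (a1 ^ 2 + a2 ^ 2 + a3 ^ 2) - 36 * (a1 * a2 * a3) ∧
      (s * (a1 ^ 2 + a2 ^ 2 + a3 ^ 2) - 36 * (a1 * a2 * a3) = 0 ↔
        (a1 = 0 ∧ a2 = 0 ∧ a3 = 0) ∨
          ({a1, a2, a3} : Multiset ℝ) = {-s / 12, -s / 12, s / 6}) := by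
  have hback : ((a1 = 0 ∧ a2 = 0 ∧ a3 = 0) ∨
      ({a1, a2, a3} : Multiset ℝ) = {-s / 12, -s / 12, s / 6}) →
      s * (a1 ^ 2 + a2 ^ 2 + a3 ^ 2) - 36 * (a1 * a2 * a3) = 0 := by
    rintro (⟨x, y, z⟩ | hm)
    · rw [x, y, z]; ring
    have hp2 := congrArg (fun m : Multiset ℝ => (m.map (fun x => x ^ 2)).sum) hm
    have hp3 := congrArg (fun m : Multiset ℝ => (m.map (fun x => x ^ 3)).sum) hm
    simp only [Multiset.insert_eq_cons, Multiset.map_cons, Multiset.map_singleton,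
      Multiset.sum_cons, Multiset.sum_singleton] at hp2 hp3
    have hcube : a1 ^ 3 + a2 ^ 3 + a3 ^ 3 = 3 * (a1 * a2 * a3) := by
      have ha3 : a3 = -a1 - a2 := by linarith
      subst ha3; ring
    linear_combination s * hp2 - 12 * hp3 + 12 * hcube
  rcases le_total a1 a2 with hab | hab
  · rcases le_total a2 a3 with hbc | hbc
    · -- max is a3
      obtain ⟨hn, hiff⟩ := weitz_key s a1 a2 a3 hs hsum h3 (by linarith) (by linarith)
      refine ⟨hn, ?_, hback⟩
      intro h
      rcases hiff.mp h with ⟨x, y, z⟩ | ⟨x, y, z⟩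
      · exact Or.inl ⟨x, y, z⟩
      · right; rw [x, y, z]
    · rcases le_total a1 a3 with hac | hac
      · -- max is a2
        obtain ⟨hn, hiff⟩ := weitz_key s a3 a1 a2 hs (by linarith) h2 (by linarith) (by linarith)
        have he : s * (a3 ^ 2 + a1 ^ 2 + a2 ^ 2) - 36 * (a3 * a1 * a2)
            = s * (a1 ^ 2 + a2 ^ 2 + a3 ^ 2) - 36 * (a1 * a2 * a3) := by ring
        rw [he] at hn hiff
        refine ⟨hn, ?_, hback⟩
        intro h
        rcases hiff.mp h with ⟨x, y, z⟩ | ⟨x, y, z⟩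
        · exact Or.inl ⟨y, z, x⟩
        · right; rw [x, y, z]; exact weitz_perm3 (-s / 12) (s / 6) (-s / 12)
      ·
        obtain ⟨hn, hiff⟩ := weitz_key s a3 a1 a2 hs (by linarith) h2 (by linarith) (by linarith)
        have he : s * (a3 ^ 2 + a1 ^ 2 + a2 ^ 2) - 36 * (a3 * a1 * a2)
            = s * (a1 ^ 2 + a2 ^ 2 + a3 ^ 2) - 36 * (a1 * a2 * a3) := by ring
        rw [he] at hn hiff
        refine ⟨hn, ?_, hback⟩
        intro h
        rcases hiff.mp h with ⟨x, y, z⟩ | ⟨x, y, z⟩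
        · exact Or.inl ⟨y, z, x⟩
        · right; rw [x, y, z]; exact weitz_perm3 (-s / 12) (s / 6) (-s / 12)
  · rcases le_total a1 a3 with hac | hac
    · -- max is a3
      obtain ⟨hn, hiff⟩ := weitz_key s a1 a2 a3 hs hsum h3 (by linarith) (by linarith)
      refine ⟨hn, ?_, hback⟩
      intro h
      rcases hiff.mp h with ⟨x, y, z⟩ | ⟨x, y, z⟩
      · exact Or.inl ⟨x, y, z⟩
      · right; rw [x, y, z]
    · -- max is a1
      obtain ⟨hn, hiff⟩ := weitz_key s a2 a3 a1 hs (by linarith) h1 (by linarith) (by linarith)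
      have he : s * (a2 ^ 2 + a3 ^ 2 + a1 ^ 2) - 36 * (a2 * a3 * a1)
          = s * (a1 ^ 2 + a2 ^ 2 + a3 ^ 2) - 36 * (a1 * a2 * a3) := by ring
      rw [he] at hn hiff
      refine ⟨hn, ?_, hback⟩
      intro h
      rcases hiff.mp h with ⟨x, y, z⟩ | ⟨x, y, z⟩
      · exact Or.inl ⟨z, x, y⟩
      · right; rw [x, y, z]; exact weitz_perm2 (s / 6) (-s / 12) (-s / 12)
end

section
/- Let x₁, x₂, x₃ be nonnegative reals with x₁ + x₂ + x₃ = 6/5. Then x₁³ + x₂³ + x₃³ − (x₁² + x₂² + x₃²) ≥ −36/125, with equality exactly at (2/5, 2/5, 2/5) and at permutations of (3/5, 3/5, 0). -/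
private lemma schur_ordered (a b c : ℝ) (hc : 0 ≤ c) (hab : b ≤ a) (hbc : c ≤ b) :
    0 ≤ a*(a-b)*(a-c)+b*(b-a)*(b-c)+c*(c-a)*(c-b) ∧
    (a*(a-b)*(a-c)+b*(b-a)*(b-c)+c*(c-a)*(c-b) = 0 → a = b ∧ (c = b ∨ c = 0)) := by
  have key : a*(a-b)*(a-c)+b*(b-a)*(b-c)+c*(c-a)*(c-b)
      = (a-b)^2*(a+b-c) + c*((a-c)*(b-c)) := by ring
  have hA : 0 ≤ (a-b)^2*(a+b-c) := mul_nonneg (sq_nonneg _) (by linarith)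
  have hB : 0 ≤ c*((a-c)*(b-c)) :=
    mul_nonneg hc (mul_nonneg (by linarith) (by linarith))
  constructor
  · rw [key]; linarith
  · intro h0
    rw [key] at h0
    have hA0 : (a-b)^2*(a+b-c) = 0 := by linarith
    have hB0 : c*((a-c)*(b-c)) = 0 := by linarith
    rcases mul_eq_zero.1 hA0 with h | h
    · have hab' : a = b := by nlinarith [sq_nonneg (a-b)]
      subst hab'
      rcases mul_eq_zero.1 hB0 with h' | h'
      · exact ⟨rfl, Or.inr h'⟩
      · have h2 : (a - c)^2 = 0 := by nlinarith
        have : a - c = 0 := by nlinarith [sq_nonneg (a-c)]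
        exact ⟨rfl, Or.inl (by linarith)⟩
    · have hc0 : c = 0 := by linarith
      have ha0 : a = 0 := by linarith
      have hb0 : b = 0 := by linarith
      exact ⟨by rw [ha0, hb0], Or.inr hc0⟩

private lemma schur (a b c : ℝ) (ha : 0 ≤ a) (hb : 0 ≤ b) (hc : 0 ≤ c) :
    0 ≤ a*(a-b)*(a-c)+b*(b-a)*(b-c)+c*(c-a)*(c-b) ∧
    (a*(a-b)*(a-c)+b*(b-a)*(b-c)+c*(c-a)*(c-b) = 0 →
      (a = b ∧ b = c) ∨ (a = b ∧ c = 0) ∨ (a = c ∧ b = 0) ∨ (b = c ∧ a = 0)) := by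
  rcases le_total a b with h₁ | h₁ <;> rcases le_total b c with h₂ | h₂ <;>
    rcases le_total a c with h₃ | h₃
  · -- a ≤ b ≤ c
    obtain ⟨hge, heq⟩ := schur_ordered c b a ha h₂ h₁
    have hperm : c*(c-b)*(c-a)+b*(b-c)*(b-a)+a*(a-c)*(a-b)
        = a*(a-b)*(a-c)+b*(b-a)*(b-c)+c*(c-a)*(c-b) := by ring
    rw [hperm] at hge heq
    refine ⟨hge, fun h0 => ?_⟩
    rcases heq h0 with ⟨hpq, hr | hr0⟩
    · exact Or.inl ⟨by linarith, by linarith⟩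
    · exact Or.inr (Or.inr (Or.inr ⟨by linarith, hr0⟩))
  · -- a ≤ b ≤ c (with c ≤ a, degenerate)
    obtain ⟨hge, heq⟩ := schur_ordered c b a ha h₂ h₁
    have hperm : c*(c-b)*(c-a)+b*(b-c)*(b-a)+a*(a-c)*(a-b)
        = a*(a-b)*(a-c)+b*(b-a)*(b-c)+c*(c-a)*(c-b) := by ring
    rw [hperm] at hge heq
    refine ⟨hge, fun h0 => ?_⟩
    rcases heq h0 with ⟨hpq, hr | hr0⟩
    · exact Or.inl ⟨by linarith, by linarith⟩
    · exact Or.inr (Or.inr (Or.inr ⟨by linarith, hr0⟩))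
  · -- a ≤ c ≤ b : sorted b ≥ c ≥ a
    obtain ⟨hge, heq⟩ := schur_ordered b c a ha h₂ h₃
    have hperm : b*(b-c)*(b-a)+c*(c-b)*(c-a)+a*(a-b)*(a-c)
        = a*(a-b)*(a-c)+b*(b-a)*(b-c)+c*(c-a)*(c-b) := by ring
    rw [hperm] at hge heq
    refine ⟨hge, fun h0 => ?_⟩
    rcases heq h0 with ⟨hpq, hr | hr0⟩
    · exact Or.inl ⟨by linarith, by linarith⟩
    · exact Or.inr (Or.inr (Or.inr ⟨by linarith, hr0⟩))
  · -- c ≤ a ≤ b : sorted b ≥ a ≥ c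
    obtain ⟨hge, heq⟩ := schur_ordered b a c hc h₁ h₃
    have hperm : b*(b-a)*(b-c)+a*(a-b)*(a-c)+c*(c-b)*(c-a)
        = a*(a-b)*(a-c)+b*(b-a)*(b-c)+c*(c-a)*(c-b) := by ring
    rw [hperm] at hge heq
    refine ⟨hge, fun h0 => ?_⟩
    rcases heq h0 with ⟨hpq, hr | hr0⟩
    · exact Or.inl ⟨by linarith, by linarith⟩
    · exact Or.inr (Or.inl ⟨by linarith, hr0⟩)
  · -- b ≤ a ≤ c : sorted c ≥ a ≥ b
    obtain ⟨hge, heq⟩ := schur_ordered c a b hb h₃ h₁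
    have hperm : c*(c-a)*(c-b)+a*(a-c)*(a-b)+b*(b-c)*(b-a)
        = a*(a-b)*(a-c)+b*(b-a)*(b-c)+c*(c-a)*(c-b) := by ring
    rw [hperm] at hge heq
    refine ⟨hge, fun h0 => ?_⟩
    rcases heq h0 with ⟨hpq, hr | hr0⟩
    · exact Or.inl ⟨by linarith, by linarith⟩
    · exact Or.inr (Or.inr (Or.inl ⟨by linarith, hr0⟩))
  · -- b ≤ c ≤ a : sorted a ≥ c ≥ b
    obtain ⟨hge, heq⟩ := schur_ordered a c b hb h₃ h₂
    have hperm : a*(a-c)*(a-b)+c*(c-a)*(c-b)+b*(b-a)*(b-c)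
        = a*(a-b)*(a-c)+b*(b-a)*(b-c)+c*(c-a)*(c-b) := by ring
    rw [hperm] at hge heq
    refine ⟨hge, fun h0 => ?_⟩
    rcases heq h0 with ⟨hpq, hr | hr0⟩
    · exact Or.inl ⟨by linarith, by linarith⟩
    · exact Or.inr (Or.inr (Or.inl ⟨by linarith, hr0⟩))
  · -- c ≤ b ≤ a (degenerate with a ≤ c)
    obtain ⟨hge, heq⟩ := schur_ordered a b c hc h₁ h₂
    refine ⟨hge, fun h0 => ?_⟩
    rcases heq h0 with ⟨hpq, hr | hr0⟩
    · exact Or.inl ⟨by linarith, by linarith⟩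
    · exact Or.inr (Or.inl ⟨by linarith, hr0⟩)
  · -- c ≤ b ≤ a
    obtain ⟨hge, heq⟩ := schur_ordered a b c hc h₁ h₂
    refine ⟨hge, fun h0 => ?_⟩
    rcases heq h0 with ⟨hpq, hr | hr0⟩
    · exact Or.inl ⟨by linarith, by linarith⟩
    · exact Or.inr (Or.inl ⟨by linarith, hr0⟩)

/-- Normalized cubic minimization (Fu–Lu Lemma 3.3): for nonnegative reals with
sum `6/5`, `∑ xᵢ³ − ∑ xᵢ² ≥ −36/125`, with equality exactly at `(2/5,2/5,2/5)`
and permutations of `(3/5,3/5,0)`. -/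
theorem cubic_minimization (x1 x2 x3 : ℝ)
    (h1 : 0 ≤ x1) (h2 : 0 ≤ x2) (h3 : 0 ≤ x3)
    (hsum : x1 + x2 + x3 = 6 / 5) :
    x1 ^ 3 + x2 ^ 3 + x3 ^ 3 - (x1 ^ 2 + x2 ^ 2 + x3 ^ 2) ≥ -36 / 125 ∧
      (x1 ^ 3 + x2 ^ 3 + x3 ^ 3 - (x1 ^ 2 + x2 ^ 2 + x3 ^ 2) = -36 / 125 ↔
        (x1 = 2 / 5 ∧ x2 = 2 / 5 ∧ x3 = 2 / 5) ∨
          ({x1, x2, x3} : Multiset ℝ) = {3 / 5, 3 / 5, 0}) := by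
  obtain ⟨hge, heq⟩ := schur x1 x2 x3 h1 h2 h3
  have hS : x1^3+x2^3+x3^3 - (x1^2+x2^2+x3^2) + 36/125
      = (x1*(x1-x2)*(x1-x3)+x2*(x2-x1)*(x2-x3)+x3*(x3-x1)*(x3-x2))/3 := by
    linear_combination ((2/3)*(x1+x2+x3)^2 - (1/5)*(x1+x2+x3) - 6/25
      - (5/3)*(x1*x2+x1*x3+x2*x3)) * hsum
  constructor
  · linarith
  constructor
  · intro h0
    have hz : x1*(x1-x2)*(x1-x3)+x2*(x2-x1)*(x2-x3)+x3*(x3-x1)*(x3-x2) = 0 := by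
      linarith
    rcases heq hz with ⟨e1, e2⟩ | ⟨e1, e2⟩ | ⟨e1, e2⟩ | ⟨e1, e2⟩
    · exact Or.inl ⟨by linarith, by linarith, by linarith⟩
    · right
      have v1 : x1 = 3/5 := by linarith
      have v2 : x2 = 3/5 := by linarith
      rw [v1, v2, e2]
    · right
      have v1 : x1 = 3/5 := by linarith
      have v3 : x3 = 3/5 := by linarith
      rw [v1, v3, e2]
      exact congrArg _ (Multiset.cons_swap _ _ _)
    · right
      have v2 : x2 = 3/5 := by linarith
      have v3 : x3 = 3/5 := by linarith
      rw [v2, v3, e2]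
      simp only [Multiset.insert_eq_cons]
      rw [Multiset.cons_swap]
      exact congrArg _ (Multiset.cons_swap _ _ _)
  · rintro (⟨v1, v2, v3⟩ | hm)
    · rw [v1, v2, v3]; norm_num
    · have hmap := congrArg
        (fun s : Multiset ℝ => (s.map (fun x => x^3 - x^2)).sum) hm
      simp only [Multiset.insert_eq_cons, Multiset.map_cons, Multiset.sum_cons,
        Multiset.map_singleton, Multiset.sum_singleton] at hmap
      norm_num at hmap
      linarith
end

section
/- Let λ_{ij} = s/12 − a_i − b_j as above with ∑a_i = ∑b_j = 0. If the sorted sequence of the nine λ_{ij} satisfies λ₁ + λ₂ + λ₃ ≥ −3λ̄ where λ̄ is their average, then s ≥ 0; and if s = 0, then a₃ ≤ 0 and b₃ ≤ 0, which together with a₁+a₂+a₃ = 0 and a₁ ≤ a₂ ≤ a₃ forces a₁ = a₂ = a₃ = 0 and likewise b₁ = b₂ = b₃ = 0. -/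
open Finset

/-- Under the cone condition on `λ_{ij} = s/12 − a_i − b_j` (trace-free
nondecreasing `a`, `b`): `s ≥ 0`, and if `s = 0` then `a₃ ≤ 0`, `b₃ ≤ 0`,
forcing `a ≡ 0` and `b ≡ 0`. -/
theorem cone_condition_scalar_nonneg (s : ℝ) (a b : Fin 3 → ℝ)
    (ha : Monotone a) (hb : Monotone b)
    (hsa : ∑ i, a i = 0) (hsb : ∑ j, b j = 0)
    (hcone : ∀ p q r : Fin 3 × Fin 3, p ≠ q → p ≠ r → q ≠ r →
      (s / 12 - a p.1 - b p.2) + (s / 12 - a q.1 - b q.2) + (s / 12 - a r.1 - b r.2) ≥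
        -3 * ((∑ p : Fin 3 × Fin 3, (s / 12 - a p.1 - b p.2)) / 9)) :
    0 ≤ s ∧ (s = 0 → a 2 ≤ 0 ∧ b 2 ≤ 0 ∧ (∀ i, a i = 0) ∧ (∀ j, b j = 0)) := by
  simp only [Fin.sum_univ_three] at hsa hsb
  have ha01 : a 0 ≤ a 1 := ha (by decide : (0:Fin 3) ≤ 1)
  have ha12 : a 1 ≤ a 2 := ha (by decide : (1:Fin 3) ≤ 2)
  have hb01 : b 0 ≤ b 1 := hb (by decide : (0:Fin 3) ≤ 1)
  have hb12 : b 1 ≤ b 2 := hb (by decide : (1:Fin 3) ≤ 2)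
  have h1 := hcone ((2:Fin 3), (2:Fin 3)) (2, 1) (1, 2) (by decide) (by decide) (by decide)
  have h2 := hcone ((2:Fin 3), (0:Fin 3)) (2, 1) (2, 2) (by decide) (by decide) (by decide)
  have h3 := hcone ((0:Fin 3), (2:Fin 3)) (1, 2) (2, 2) (by decide) (by decide) (by decide)
  simp only [Fintype.sum_prod_type, Fin.sum_univ_three] at h1 h2 h3
  refine ⟨by linarith, fun hs => ?_⟩
  subst hs
  have ha2 : a 2 ≤ 0 := by linarith
  have hb2 : b 2 ≤ 0 := by linarith
  refine ⟨ha2, hb2, fun i => ?_, fun j => ?_⟩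
  · fin_cases i <;> simp <;> linarith
  · fin_cases j <;> simp <;> linarith
end

section
/- Let a₁ ≤ a₂ ≤ a₃ with a₁+a₂+a₃ = 0 and a₃ ≤ s/6 for some s > 0. Then f(a₁,a₂,a₃) = 2[s(a₁²+a₂²+a₃²) − 12(a₁³+a₂³+a₃³)] = 0 if and only if (a₁,a₂,a₃) = (0,0,0) or (a₁,a₂,a₃) = (−s/12, −s/12, s/6). -/
/-- Equality case of the four-dimensional Weitzenböck estimate: for a
nondecreasing trace-free triple with `a₃ ≤ s/6`, the curvature term vanishes
iff the triple is `(0,0,0)` or `(−s/12, −s/12, s/6)`. -/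
theorem weitzenboeck_equality_case (s a1 a2 a3 : ℝ) (hs : 0 < s)
    (h12 : a1 ≤ a2) (h23 : a2 ≤ a3) (hsum : a1 + a2 + a3 = 0) (h3 : a3 ≤ s / 6) :
    2 * (s * (a1 ^ 2 + a2 ^ 2 + a3 ^ 2) - 12 * (a1 ^ 3 + a2 ^ 3 + a3 ^ 3)) = 0 ↔
      (a1 = 0 ∧ a2 = 0 ∧ a3 = 0) ∨
        (a1 = -s / 12 ∧ a2 = -s / 12 ∧ a3 = s / 6) := by
  constructor
  · intro hf
    have ha3 : 0 ≤ a3 := by linarith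
    by_cases h2 : a2 ≤ 0
    · -- a1 ≤ a2 ≤ 0, so a1*a2 ≥ 0
      have h1 : a1 ≤ 0 := h12.trans h2
      have t2 : 0 ≤ a1 * a2 * (s - 6 * a3) :=
        mul_nonneg (by nlinarith [mul_nonneg (neg_nonneg.2 h1) (neg_nonneg.2 h2)] : (0:ℝ) ≤ a1 * a2) (by linarith)
      have t1 : 0 ≤ s * (a1 - a2) ^ 2 := by positivity
      have heq : 4 * (s * (a1 - a2) ^ 2) + 12 * (a1 * a2 * (s - 6 * a3)) = 0 := by
        linear_combination hf + (2 * s * (a1 + a2 - a3) +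
          24 * (a1 ^ 2 + a2 ^ 2 + a3 ^ 2 - a1 * a2 - a2 * a3 - a1 * a3)) * hsum
      have e1 : s * (a1 - a2) ^ 2 = 0 := by linarith
      have e2 : a1 * a2 * (s - 6 * a3) = 0 := by linarith
      have h12' : a1 = a2 := by
        have : (a1 - a2) ^ 2 = 0 := by
          rcases mul_eq_zero.1 e1 with h | h
          · exact absurd h (ne_of_gt hs)
          · exact h
        have := pow_eq_zero_iff (n := 2) (by norm_num) |>.1 this
        linarith
      subst h12'
      rcases mul_eq_zero.1 e2 with h | h
      · have : a1 = 0 := by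
          have := mul_self_eq_zero.1 (by linarith [h] : a1 * a1 = 0)
          exact this
        left; refine ⟨this, this, by linarith⟩
      · have ha3' : a3 = s / 6 := by linarith
        right; refine ⟨by linarith, by linarith, ha3'⟩
    · -- a2 > 0 : contradiction
      push_neg at h2
      have ha3' : 0 < a3 := lt_of_lt_of_le h2 h23
      have h1 : a1 < 0 := by linarith
      exfalso
      have ha1 : a1 = -a2 - a3 := by linarith
      rw [ha1] at hf
      nlinarith [mul_pos (mul_pos h2 ha3') (add_pos h2 ha3'), mul_pos hs (mul_pos h2 h2)]
  · rintro (⟨e1, e2, e3⟩ | ⟨e1, e2, e3⟩) <;> subst e1 <;> subst e2 <;> subst e3 <;> ring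
end
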